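/- The tensor Cayley–Hamilton identities 𝔠_{k,d}(x) = 0: Let F be a field of characteristic zero, let d ≥ 1, let 0 ≤ k ≤ d and set n := d + 1 − k. Then for every matrix x : Matrix (Fin d) (Fin d) F, (∑_{τ ∈ Perm (Fin n)} sgn(τ) • P_τ) * (∑_{j=0}^{k} (−1)^j σ_j(x) • 𝔗_{k−j,n}(x)) = 0 in Matrix (Fin n → Fin d) (Fin n → Fin d) F, where σ_0(x) = 1. (For k = 0 this is the vanishing of the antisymmetrizer on d+1 tensor factors; for k = d, n = 1, it is the Cayley–Hamilton theorem.) -/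

import Mathlib

/-!
Work over `F⟦z⟧` with `A = 1 - z • x`. Its inverse is `Y = ∑ zⁱ xⁱ`, and its determinant is the
reversed characteristic polynomial `∑ⱼ (-1)ʲ σⱼ(x) zʲ`. The matrix `𝔗_{i,n}(x)` is the
`zⁱ`-coefficient of `Y ⊗ ⋯ ⊗ Y`, and the antisymmetrizer turns the entries of `Y ⊗ ⋯ ⊗ Y` into
`n × n` minors of `Y`. Hence the `(f, g)` entry of the left-hand side is the `zᵏ`-coefficient of
`det A · det Y[f, g]`. By Jacobi's complementary minor theorem this is, up to sign, a
`(d - n)`-minor of `A`. The entries of `A` are linear in `z`, so that minor is a polynomial of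
degree at most `d - n = k - 1` and its `zᵏ`-coefficient vanishes.
-/

/-- The permutation operator `P_σ` on the `m`-th tensor power of the `d`-dimensional space,
realized as a matrix indexed by functions `Fin m → Fin d`. -/
def permMat (d m : ℕ) (R : Type*) [CommRing R] (σ : Equiv.Perm (Fin m)) :
    Matrix (Fin m → Fin d) (Fin m → Fin d) R :=
  Matrix.of fun f g => if g = f ∘ σ then 1 else 0

/-- The Kronecker product `K(x) = x 0 ⊗ x 1 ⊗ ⋯ ⊗ x (m-1)` of a family of `d × d` matrices. -/
def kron (d m : ℕ) (R : Type*) [CommRing R]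
    (x : Fin m → Matrix (Fin d) (Fin d) R) :
    Matrix (Fin m → Fin d) (Fin m → Fin d) R :=
  Matrix.of fun f g => ∏ i, x i (f i) (g i)

/-- `σ_j(x) := (-1)^j` times the coefficient of `t^(d-j)` in the characteristic polynomial of `x`,
so that `det (t•1 - x) = t^d + ∑_{j=1}^d (-1)^j σ_j(x) t^(d-j)` and `σ_0(x) = 1`. -/
noncomputable def sigmaCoeff (d : ℕ) {F : Type*} [Field F]
    (x : Matrix (Fin d) (Fin d) F) (j : ℕ) : F :=
  (-1) ^ j * (Matrix.charpoly x).coeff (d - j)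

/-- `𝔗_{i,n}(x)`: the sum over all `h : Fin n → ℕ` with `∑ j, h j = i` of the Kronecker
products `x^(h 0) ⊗ ⋯ ⊗ x^(h (n-1))`. -/
noncomputable def frakT (d n : ℕ) {F : Type*} [Field F]
    (x : Matrix (Fin d) (Fin d) F) (i : ℕ) :
    Matrix (Fin n → Fin d) (Fin n → Fin d) F :=
  ∑ h ∈ Finset.Nat.antidiagonalTuple n i, kron d n F (fun j => x ^ h j)

open Polynomial

theorem PowerSeries.coeff_prod_mk {R : Type*} [CommSemiring R] {n : ℕ} (a : Fin n → ℕ → R)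
    (i : ℕ) :
    coeff i (∏ t, mk (a t)) = ∑ h ∈ Finset.Nat.antidiagonalTuple n i, ∏ t, a t (h t) := by
  rw [coeff_prod, Finset.finsuppAntidiag, Finset.sum_map,
    ← Finset.piAntidiag_univ_fin_eq_antidiagonalTuple]
  simp only [coeff_mk]
  exact Finset.sum_attach (Finset.piAntidiag Finset.univ i) (fun h => ∏ t, a t (h t))

theorem Function.Injective.exists_sumEquiv {α β ι : Type*} [Fintype α] [Fintype β] [Fintype ι]
    {u : α → ι} (hu : u.Injective) (hcard : Fintype.card α + Fintype.card β = Fintype.card ι) :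
    ∃ e : α ⊕ β ≃ ι, e ∘ Sum.inl = u := by
  classical
  have hc : Fintype.card β = Fintype.card ((Set.range u)ᶜ : Set ι) := by
    rw [Fintype.card_compl_set, Set.card_range_of_injective hu]
    omega
  exact ⟨(Equiv.sumCongr (Equiv.ofInjective u hu) (Fintype.equivOfCardEq hc)).trans
    (Equiv.Set.sumCompl (Set.range u)), by ext; simp⟩

namespace Matrix

variable {ι α β R : Type*} [Fintype α] [Fintype β] [DecidableEq α] [DecidableEq β] [CommRing R]

theorem det_submatrix_eq_zero_of_not_injective {κ : Type*} (M : Matrix ι κ R) {f : α → ι}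
    {g : α → κ} (h : ¬ (f.Injective ∧ g.Injective)) : det (M.submatrix f g) = 0 := by
  simp_rw [not_and_or, Function.not_injective_iff] at h
  obtain ⟨i, j, hfij, hij⟩ | ⟨i, j, hgij, hij⟩ := h
  · exact det_zero_of_row_eq hij (by ext; simp [hfij])
  · exact det_zero_of_column_eq hij (by simp [hgij])

theorem det_mul_det_toBlocks₁₁_of_mul_eq_one {B C : Matrix (α ⊕ β) (α ⊕ β) R} (h : B * C = 1) :
    det B * det C.toBlocks₁₁ = det B.toBlocks₂₂ := by
  rw [← fromBlocks_toBlocks B, ← fromBlocks_toBlocks C, fromBlocks_multiply,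
    ← fromBlocks_one] at h
  obtain ⟨h₁₁, -, h₂₁, -⟩ := fromBlocks_inj.mp h
  have hblock : B * fromBlocks C.toBlocks₁₁ 0 C.toBlocks₂₁ 1 =
      fromBlocks 1 B.toBlocks₁₂ 0 B.toBlocks₂₂ := by
    conv_lhs => rw [← fromBlocks_toBlocks B]
    simp [fromBlocks_multiply, h₁₁, h₂₁]
  simpa [det_fromBlocks_zero₁₂, det_fromBlocks_zero₂₁] using congrArg det hblock

variable [DecidableEq ι]

theorem natDegree_det_submatrix_one_sub_X_smul_le (x : Matrix ι ι R) (u v : α → ι) :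
    (det ((1 - (X : R[X]) • x.map C).submatrix u v)).natDegree ≤ Fintype.card α := by
  have : (1 - (X : R[X]) • x.map C).submatrix u v =
      (X : R[X]) • (-x.submatrix u v).map C + ((1 : Matrix ι ι R).submatrix u v).map C := by
    ext a b
    simp [one_apply, apply_ite, sub_eq_neg_add]
  rw [this]
  exact natDegree_det_X_add_C_le _ _

variable [Fintype ι]

/-- Jacobi's complementary minor theorem. -/
theorem det_mul_det_submatrix_inl_of_mul_eq_one {A B : Matrix ι ι R} (h : A * B = 1)
    (e₁ e₂ : α ⊕ β ≃ ι) :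
    det A * det (B.submatrix (e₁ ∘ Sum.inl) (e₂ ∘ Sum.inl)) =
      Equiv.Perm.sign (e₂.trans e₁.symm) * det (A.submatrix (e₂ ∘ Sum.inr) (e₁ ∘ Sum.inr)) := by
  have hA : det (A.submatrix e₂ e₁) = Equiv.Perm.sign (e₂.trans e₁.symm) * det A := by
    rw [← det_submatrix_equiv_self e₁ A, ← det_permute, submatrix_submatrix]
    congr
    ext
    simp
  have hblocks := det_mul_det_toBlocks₁₁_of_mul_eq_one (B := A.submatrix e₂ e₁)
    (C := B.submatrix e₁ e₂) (by rw [submatrix_mul_equiv, h, submatrix_one_equiv])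
  rw [hA] at hblocks
  change _ = _ * det (A.submatrix e₂ e₁).toBlocks₂₂
  rw [← hblocks, ← mul_assoc, ← mul_assoc, ← Int.cast_mul, ← Units.val_mul,
    Int.units_mul_self, Units.val_one, Int.cast_one, one_mul]
  rfl

theorem coeff_charpolyRev {j : ℕ} (x : Matrix ι ι R) (hj : j ≤ Fintype.card ι) :
    x.charpolyRev.coeff j = x.charpoly.coeff (Fintype.card ι - j) := by
  nontriviality R
  rw [← reverse_charpoly, coeff_reverse, charpoly_natDegree_eq_dim, revAt_le hj]

def geomPowerSeries (x : Matrix ι ι R) : Matrix ι ι (PowerSeries R) :=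
  of fun a b => PowerSeries.mk fun i => (x ^ i) a b

theorem geomPowerSeries_eq_one_add (x : Matrix ι ι R) :
    x.geomPowerSeries = 1 + (PowerSeries.X : PowerSeries R) •
      (x.map PowerSeries.C * x.geomPowerSeries) := by
  ext a b (_ | i)
  · by_cases a = b <;> simp [geomPowerSeries, *]
  · simp [geomPowerSeries, one_apply, apply_ite, mul_apply, pow_succ',
      PowerSeries.coeff_succ_X_mul]

theorem map_one_sub_X_smul_mul_geomPowerSeries (x : Matrix ι ι R) :
    (1 - (X : R[X]) • x.map C).map ((↑) : R[X] → PowerSeries R) * x.geomPowerSeries = 1 := by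
  have : (1 - (X : R[X]) • x.map C).map ((↑) : R[X] → PowerSeries R) =
      1 - (PowerSeries.X : PowerSeries R) • x.map PowerSeries.C := by
    ext a b : 1
    simp [one_apply, apply_ite, (PowerSeries.commute_X _).eq]
  rw [this, sub_mul, smul_mul_assoc, one_mul, sub_eq_iff_eq_add]
  exact geomPowerSeries_eq_one_add x

theorem coeff_charpolyRev_mul_det_submatrix_geomPowerSeries (x : Matrix ι ι R) (f g : α → ι)
    {k : ℕ} (hk : Fintype.card α + k = Fintype.card ι + 1) :
    PowerSeries.coeff k ((x.charpolyRev : PowerSeries R) *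
      det (x.geomPowerSeries.submatrix f g)) = 0 := by
  by_cases hfg : f.Injective ∧ g.Injective
  swap
  · rw [det_submatrix_eq_zero_of_not_injective _ hfg, mul_zero, map_zero]
  obtain ⟨hf, hg⟩ := hfg
  have hcard : Fintype.card α + Fintype.card (Fin (k - 1)) = Fintype.card ι := by
    have := Fintype.card_le_of_injective f hf
    simp only [Fintype.card_fin]
    omega
  obtain ⟨e₁, rfl⟩ := hf.exists_sumEquiv hcard
  obtain ⟨e₂, rfl⟩ := hg.exists_sumEquiv hcard
  let A := 1 - (X : R[X]) • x.map C
  have hdet : (x.charpolyRev : PowerSeries R) = det (A.map (↑)) :=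
    RingHom.map_det coeToPowerSeries.ringHom A
  let minor := A.submatrix (e₂ ∘ Sum.inr) (e₁ ∘ Sum.inr)
  have hminor : det ((A.map (↑)).submatrix (e₂ ∘ Sum.inr) (e₁ ∘ Sum.inr)) =
      ((det minor : R[X]) : PowerSeries R) := by
    rw [submatrix_map]
    exact (RingHom.map_det coeToPowerSeries.ringHom minor).symm
  have hdeg : (det minor).natDegree < k :=
    (natDegree_det_submatrix_one_sub_X_smul_le x _ _).trans_lt (by simp; omega)
  rw [hdet, det_mul_det_submatrix_inl_of_mul_eq_one (map_one_sub_X_smul_mul_geomPowerSeries x),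
    hminor, ← map_intCast (PowerSeries.C (R := R)), PowerSeries.coeff_C_mul, coeff_coe,
    coeff_eq_zero_of_natDegree_lt hdeg, mul_zero]

end Matrix

open Finset Matrix

theorem permMat_mul_apply {d m : ℕ} {R : Type*} [CommRing R] (σ : Equiv.Perm (Fin m))
    (M : Matrix (Fin m → Fin d) (Fin m → Fin d) R) (f g : Fin m → Fin d) :
    (permMat d m R σ * M) f g = M (f ∘ σ) g := by
  simp [permMat, mul_apply]

section TensorCayleyHamilton

variable {F : Type*} [Field F] {d n : ℕ} (x : Matrix (Fin d) (Fin d) F)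

theorem frakT_apply (i : ℕ) (f g : Fin n → Fin d) :
    frakT d n x i f g = PowerSeries.coeff i (∏ t, x.geomPowerSeries (f t) (g t)) := by
  simp [frakT, kron, Matrix.sum_apply, geomPowerSeries, PowerSeries.coeff_prod_mk]

theorem antisymmetrizer_mul_frakT_apply (i : ℕ) (f g : Fin n → Fin d) :
    ((∑ τ : Equiv.Perm (Fin n), ((Equiv.Perm.sign τ : ℤ) : F) • permMat d n F τ) *
      frakT d n x i) f g = PowerSeries.coeff i (det (x.geomPowerSeries.submatrix f g)) := by
  rw [det_apply', map_sum, sum_mul, Matrix.sum_apply]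
  refine sum_congr rfl fun τ _ => ?_
  rw [smul_mul, Matrix.smul_apply, permMat_mul_apply, frakT_apply,
    ← map_intCast (PowerSeries.C (R := F)), PowerSeries.coeff_C_mul, smul_eq_mul]
  rfl

theorem neg_one_pow_mul_sigmaCoeff {j : ℕ} (hj : j ≤ d) :
    (-1) ^ j * sigmaCoeff d x j = x.charpolyRev.coeff j := by
  rw [sigmaCoeff, ← mul_assoc, ← mul_pow, neg_one_mul, neg_neg, one_pow, one_mul,
    coeff_charpolyRev x (by simpa using hj), Fintype.card_fin]

end TensorCayleyHamilton

theorem tensor_cayley_hamilton_general (F : Type*) [Field F]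
    (d k : ℕ) (hk : k ≤ d) (x : Matrix (Fin d) (Fin d) F) :
    (∑ τ : Equiv.Perm (Fin (d + 1 - k)),
        ((Equiv.Perm.sign τ : ℤ) : F) • permMat d (d + 1 - k) F τ) *
      (∑ j ∈ Finset.range (k + 1),
        ((-1 : F) ^ j * sigmaCoeff d x j) • frakT d (d + 1 - k) x (k - j)) = 0 := by
  ext f g
  calc _ = ∑ j ∈ range (k + 1), PowerSeries.coeff j (x.charpolyRev : PowerSeries F) *
        PowerSeries.coeff (k - j) (det (x.geomPowerSeries.submatrix f g)) := by
        simp only [Matrix.mul_sum, Matrix.sum_apply, Matrix.mul_smul, Matrix.smul_apply,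
          smul_eq_mul]
        refine sum_congr rfl fun j hj => ?_
        rw [antisymmetrizer_mul_frakT_apply,
          neg_one_pow_mul_sigmaCoeff x (by rw [mem_range] at hj; omega), coeff_coe]
    _ = PowerSeries.coeff k ((x.charpolyRev : PowerSeries F) *
          det (x.geomPowerSeries.submatrix f g)) := by
        rw [PowerSeries.coeff_mul, Nat.sum_antidiagonal_eq_sum_range_succ_mk]
    _ = 0 := coeff_charpolyRev_mul_det_submatrix_geomPowerSeries x f g (by simp; omega)

/-- **The tensor Cayley–Hamilton identities `𝔠_{k,d}(x) = 0`.**  For `0 ≤ k ≤ d` and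
`n = d + 1 - k`, the product of the antisymmetrizer `∑_τ sgn(τ) • P_τ` on `n` tensor factors with
`∑_{j=0}^k (-1)^j σ_j(x) • 𝔗_{k-j,n}(x)` vanishes for every `d × d` matrix `x`. -/
theorem tensor_cayley_hamilton (F : Type*) [Field F] [CharZero F]
    (d k : ℕ) (hd : 1 ≤ d) (hk : k ≤ d) (x : Matrix (Fin d) (Fin d) F) :
    (∑ τ : Equiv.Perm (Fin (d + 1 - k)),
        ((Equiv.Perm.sign τ : ℤ) : F) • permMat d (d + 1 - k) F τ) *
      (∑ j ∈ Finset.range (k + 1),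
        ((-1 : F) ^ j * sigmaCoeff d x j) • frakT d (d + 1 - k) x (k - j)) = 0 :=
  tensor_cayley_hamilton_general F d k hk x
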